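/- Let n ≥ 1, N = 2n+2, and define the phonon coordinates of a point (q, p) ∈ ℝ^{2N} by, for 1 ≤ j < N/2, Q_j = √(2/N) Σ_{k=1}^N cos(2kjπ/N) q_k, Q_{N−j} = √(2/N) Σ_{k=1}^N sin(2kjπ/N) q_k, Q_{N/2} = (1/√N) Σ_{k=1}^N (−1)^k q_k, Q_N = (1/√N) Σ_{k=1}^N q_k, and the same formulas for P in terms of p. Let S : ℝ^{2N} → ℝ^{2N} be the linear map S(q, p)_j = (−q_{N−j}, −p_{N−j}) for 1 ≤ j ≤ N−1, S(q, p)_N = (−q_N, −p_N). Then in phonon coordinates S acts by Q_k ↦ −Q_k, P_k ↦ −P_k for 1 ≤ k ≤ n+1 and k = 2n+2, and by Q_k ↦ Q_k, P_k ↦ P_k for n+2 ≤ k ≤ 2n+1. -/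

import Mathlib

noncomputable section

open Finset

/-- The coordinate with (1-based) label `j` is the component `(j−1) mod N` of `Fin N`. -/
def co (N : ℕ) (hN : 0 < N) (j : ℕ) : Fin N := ⟨(j - 1) % N, Nat.mod_lt _ hN⟩

/-- The phonon coordinate with label `j` (`1 ≤ j ≤ N`) of a vector `q ∈ ℝ^N`:
for `1 ≤ j < N/2` it is `√(2/N) Σ_{k=1}^N cos(2kjπ/N) q_k`; the label `N − j`
(`1 ≤ j < N/2`) gives `√(2/N) Σ_{k=1}^N sin(2kjπ/N) q_k`; label `N/2` gives
`(1/√N) Σ_{k=1}^N (−1)^k q_k`; label `N` gives `(1/√N) Σ_{k=1}^N q_k`. -/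
def phon (N : ℕ) (hN : 0 < N) (j : ℕ) (q : Fin N → ℝ) : ℝ :=
  if 2 * j < N then
    Real.sqrt (2 / N) * ∑ k ∈ Finset.Icc 1 N, Real.cos (2 * k * j * Real.pi / N) * q (co N hN k)
  else if j = N then
    (1 / Real.sqrt N) * ∑ k ∈ Finset.Icc 1 N, q (co N hN k)
  else if 2 * j = N then
    (1 / Real.sqrt N) * ∑ k ∈ Finset.Icc 1 N, (-1 : ℝ) ^ k * q (co N hN k)
  else
    Real.sqrt (2 / N) *
      ∑ k ∈ Finset.Icc 1 N, Real.sin (2 * k * (N - j) * Real.pi / N) * q (co N hN k)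

/-- The reversal-with-sign-flip `S : (q,p)_j ↦ (−q_{N−j}, −p_{N−j})`
(`S(q,p)_N = (−q_N, −p_N)`); in 0-based components `i ↦ (2N−2−i) mod N`. -/
def Smap (N : ℕ) (hN : 0 < N) (x : (Fin N → ℝ) × (Fin N → ℝ)) :
    (Fin N → ℝ) × (Fin N → ℝ) :=
  (fun i => - x.1 (⟨(2 * N - 2 - (i : ℕ)) % N, Nat.mod_lt _ hN⟩ : Fin N),
   fun i => - x.2 (⟨(2 * N - 2 - (i : ℕ)) % N, Nat.mod_lt _ hN⟩ : Fin N))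

/-! `S` reverses the labels, `k ↦ N − k` modulo `N`, and flips the sign. Every phonon coordinate
is a weighted sum `Σₖ w(k) q_k` whose weight is either even under `k ↦ N − k` (the cosines, the
constant, and `(−1)^k` because `N` is even) or odd (the sines), since the arguments of the
trigonometric weights at `k` and `N − k` add up to a multiple of `2π`. Reindexing the sum by this
involution therefore multiplies the coordinate by `−1` in the even case and by `+1` in the odd
case. -/

-- Labels are read modulo `N`, so `N` (which stands for `0`) is fixed.
def reflectLabel (N k : ℕ) : ℕ := if k = N then N else N - k

lemma reflectLabel_mem {N k : ℕ} (hk : k ∈ Icc 1 N) : reflectLabel N k ∈ Icc 1 N := by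
  rw [mem_Icc] at *
  unfold reflectLabel
  split_ifs <;> omega

lemma reflectLabel_reflectLabel {N k : ℕ} (hk : k ∈ Icc 1 N) :
    reflectLabel N (reflectLabel N k) = k := by
  rw [mem_Icc] at hk
  unfold reflectLabel
  split_ifs <;> omega

lemma sum_Icc_comp_reflectLabel {M : Type*} [AddCommMonoid M] (N : ℕ) (F : ℕ → M) :
    ∑ k ∈ Icc 1 N, F (reflectLabel N k) = ∑ k ∈ Icc 1 N, F k :=
  sum_nbij' (reflectLabel N) (reflectLabel N) (fun _ => reflectLabel_mem)
    (fun _ => reflectLabel_mem) (fun _ => reflectLabel_reflectLabel)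
    (fun _ => reflectLabel_reflectLabel) (fun _ _ => rfl)

def negReflect (N : ℕ) (hN : 0 < N) (q : Fin N → ℝ) : Fin N → ℝ :=
  fun i => - q ⟨(2 * N - 2 - (i : ℕ)) % N, Nat.mod_lt _ hN⟩

lemma Smap_eq_negReflect (N : ℕ) (hN : 0 < N) (x : (Fin N → ℝ) × (Fin N → ℝ)) :
    Smap N hN x = (negReflect N hN x.1, negReflect N hN x.2) :=
  rfl

lemma negReflect_co {N : ℕ} (hN : 0 < N) (q : Fin N → ℝ) {k : ℕ} (hk : k ∈ Icc 1 N) :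
    negReflect N hN q (co N hN k) = - q (co N hN (reflectLabel N k)) := by
  rw [mem_Icc] at hk
  unfold negReflect
  congr 2
  ext
  simp only [co, reflectLabel, Nat.mod_eq_of_lt (show k - 1 < N by omega)]
  split_ifs with h
  · subst h
    rw [show 2 * k - 2 - (k - 1) = k - 1 by omega]
  · rw [show 2 * N - 2 - (k - 1) = (N - 1 - k) + N by omega, Nat.add_mod_right,
      Nat.mod_eq_of_lt (by omega), Nat.mod_eq_of_lt (by omega)]
    omega

lemma sum_mul_negReflect_co {N : ℕ} (hN : 0 < N) (w : ℕ → ℝ) (ε : ℝ)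
    (hw : ∀ k ∈ Icc 1 N, w (reflectLabel N k) = ε * w k) (q : Fin N → ℝ) :
    ∑ k ∈ Icc 1 N, w k * negReflect N hN q (co N hN k)
      = -ε * ∑ k ∈ Icc 1 N, w k * q (co N hN k) := by
  calc ∑ k ∈ Icc 1 N, w k * negReflect N hN q (co N hN k)
      = ∑ k ∈ Icc 1 N, w (reflectLabel N (reflectLabel N k))
          * -q (co N hN (reflectLabel N k)) :=
        sum_congr rfl fun k hk => by rw [negReflect_co hN q hk, reflectLabel_reflectLabel hk]
    _ = ∑ k ∈ Icc 1 N, w (reflectLabel N k) * -q (co N hN k) :=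
        sum_Icc_comp_reflectLabel N fun m => w (reflectLabel N m) * -q (co N hN m)
    _ = -ε * ∑ k ∈ Icc 1 N, w k * q (co N hN k) := by
        rw [mul_sum]
        exact sum_congr rfl fun k hk => by rw [hw k hk]; ring

lemma Function.Periodic.apply_reflectLabel {f : ℝ → ℝ} (hf : f.Periodic (2 * Real.pi))
    {N : ℕ} (m : ℤ) {k : ℕ} (hk : k ∈ Icc 1 N) :
    f (2 * (reflectLabel N k : ℝ) * m * Real.pi / N) = f (-(2 * k * m * Real.pi / N)) := by
  rw [mem_Icc] at hk
  have hN : (N : ℝ) ≠ 0 := Nat.cast_ne_zero.2 (by omega)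
  unfold reflectLabel
  split_ifs with h
  · subst h
    rw [show 2 * (k : ℝ) * m * Real.pi / k = m * (2 * Real.pi) by field_simp,
      ← neg_mul, ← Int.cast_neg, hf.int_mul_eq, hf.int_mul_eq]
  · rw [Nat.cast_sub hk.2, ← hf.int_mul_sub_eq m]
    congr 1
    field_simp

lemma neg_one_pow_reflectLabel {N : ℕ} (hEven : Even N) {k : ℕ} (hk : k ∈ Icc 1 N) :
    (-1 : ℝ) ^ reflectLabel N k = (-1) ^ k := by
  rw [mem_Icc] at hk
  unfold reflectLabel
  split_ifs with h
  · rw [h]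
  · rcases Nat.even_or_odd k with hk' | hk'
    · rw [((Nat.even_sub hk.2).2 (iff_of_true hEven hk')).neg_one_pow, hk'.neg_one_pow]
    · rw [(Nat.Even.sub_odd hk.2 hEven hk').neg_one_pow, hk'.neg_one_pow]

lemma phon_negReflect {N : ℕ} (hN : 0 < N) (hEven : Even N) (j : ℕ) (q : Fin N → ℝ) :
    phon N hN j (negReflect N hN q) = (if N < 2 * j ∧ j ≠ N then 1 else -1) * phon N hN j q := by
  by_cases hcos : 2 * j < N
  · rw [phon, phon, if_pos hcos, if_pos hcos, if_neg (by omega),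
      sum_mul_negReflect_co hN _ 1 fun k hk => by
        simpa using Real.cos_periodic.apply_reflectLabel j hk]
    ring
  by_cases hmean : j = N
  · have hsum := sum_mul_negReflect_co hN (fun _ => 1) 1 (fun _ _ => (one_mul 1).symm) q
    simp only [one_mul] at hsum
    rw [phon, phon, if_neg hcos, if_neg hcos, if_pos hmean, if_pos hmean, if_neg (by omega), hsum]
    ring
  by_cases halt : 2 * j = N
  · rw [phon, phon, if_neg hcos, if_neg hcos, if_neg hmean, if_neg hmean, if_pos halt,
      if_pos halt, if_neg (by omega),
      sum_mul_negReflect_co hN _ 1 fun k hk => by rw [neg_one_pow_reflectLabel hEven hk, one_mul]]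
    ring
  · rw [phon, phon, if_neg hcos, if_neg hcos, if_neg hmean, if_neg hmean, if_neg halt,
      if_neg halt, if_pos (by omega),
      sum_mul_negReflect_co hN _ (-1) fun k hk => by
        simpa using Real.sin_periodic.apply_reflectLabel ((N : ℤ) - j) hk]
    ring

theorem S_action_on_phonons_general (n : ℕ) (hN0 : 0 < 2 * n + 2)
    (x : (Fin (2 * n + 2) → ℝ) × (Fin (2 * n + 2) → ℝ)) :
    (∀ k, 1 ≤ k → k ≤ n + 1 →
      phon (2 * n + 2) hN0 k ((Smap (2 * n + 2) hN0 x).1) = - phon (2 * n + 2) hN0 k x.1 ∧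
      phon (2 * n + 2) hN0 k ((Smap (2 * n + 2) hN0 x).2) = - phon (2 * n + 2) hN0 k x.2) ∧
    (phon (2 * n + 2) hN0 (2 * n + 2) ((Smap (2 * n + 2) hN0 x).1)
        = - phon (2 * n + 2) hN0 (2 * n + 2) x.1 ∧
      phon (2 * n + 2) hN0 (2 * n + 2) ((Smap (2 * n + 2) hN0 x).2)
        = - phon (2 * n + 2) hN0 (2 * n + 2) x.2) ∧
    (∀ k, n + 2 ≤ k → k ≤ 2 * n + 1 →
      phon (2 * n + 2) hN0 k ((Smap (2 * n + 2) hN0 x).1) = phon (2 * n + 2) hN0 k x.1 ∧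
      phon (2 * n + 2) hN0 k ((Smap (2 * n + 2) hN0 x).2) = phon (2 * n + 2) hN0 k x.2) := by
  have hEven : Even (2 * n + 2) := ⟨n + 1, by ring⟩
  simp only [Smap_eq_negReflect, phon_negReflect hN0 hEven]
  refine ⟨fun k hk₁ hk₂ => ?_, ?_, fun k hk₁ hk₂ => ?_⟩
  · rw [if_neg (by omega)]
    constructor <;> ring
  · rw [if_neg (by omega)]
    constructor <;> ring
  · rw [if_pos (by omega)]
    constructor <;> ring

/-- Let `n ≥ 1`, `N = 2n+2`.  In phonon coordinates the symmetry `S`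
acts by `Q_k ↦ −Q_k`, `P_k ↦ −P_k` for `1 ≤ k ≤ n+1` and `k = 2n+2`, and by
`Q_k ↦ Q_k`, `P_k ↦ P_k` for `n+2 ≤ k ≤ 2n+1`. -/
theorem S_action_on_phonons (n : ℕ) (hn : 1 ≤ n) (hN0 : 0 < 2 * n + 2)
    (x : (Fin (2 * n + 2) → ℝ) × (Fin (2 * n + 2) → ℝ)) :
    (∀ k, 1 ≤ k → k ≤ n + 1 →
      phon (2 * n + 2) hN0 k ((Smap (2 * n + 2) hN0 x).1) = - phon (2 * n + 2) hN0 k x.1 ∧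
      phon (2 * n + 2) hN0 k ((Smap (2 * n + 2) hN0 x).2) = - phon (2 * n + 2) hN0 k x.2) ∧
    (phon (2 * n + 2) hN0 (2 * n + 2) ((Smap (2 * n + 2) hN0 x).1)
        = - phon (2 * n + 2) hN0 (2 * n + 2) x.1 ∧
      phon (2 * n + 2) hN0 (2 * n + 2) ((Smap (2 * n + 2) hN0 x).2)
        = - phon (2 * n + 2) hN0 (2 * n + 2) x.2) ∧
    (∀ k, n + 2 ≤ k → k ≤ 2 * n + 1 →
      phon (2 * n + 2) hN0 k ((Smap (2 * n + 2) hN0 x).1) = phon (2 * n + 2) hN0 k x.1 ∧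
      phon (2 * n + 2) hN0 k ((Smap (2 * n + 2) hN0 x).2) = phon (2 * n + 2) hN0 k x.2) :=
  S_action_on_phonons_general n hN0 x

end
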